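/- arXiv:1710.01273 — 4 statements merged into one kernel-verified Lean document; each statement's English description precedes it below -/
import Mathlib

section
/- Let E be a real Banach space and let A be the generator of a uniformly bounded strongly continuous semigroup S on E with M = sup_{t≥0} ‖S_t‖. Then every λ > 0 lies in the resolvent set of A and the resolvent satisfies ‖(λ·Id − A)^(−k)‖ ≤ M/λ^k for all k ∈ ℕ. -/
/-!
The resolvent is the Laplace transform `R y = ∫₀^∞ e^{-λu} S_u y du`. Since
`S_s R z = ∫₀^∞ e^{-λu} S_{s+u} z du`, a bound `‖S_t z‖ ≤ C` for all `t ≥ 0` gives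
`‖S_s R z‖ ≤ C / λ`; iterating from `‖S_t y‖ ≤ M ‖y‖` yields `‖R^k‖ ≤ M / λ^k`.
Differentiating `S_t R y = e^{λt} ∫_t^∞ e^{-λu} S_u y du` at `t = 0⁺` shows `R y ∈ D` with
`A R y = λ R y - y`. As `R` commutes with every `S_t`, it maps `x ∈ D` to `R x ∈ D` with
`A R x = R A x`, whence `R (λ x - A x) = x`.
-/

open Filter Topology MeasureTheory Set

section LaplaceIntegral

variable {E : Type*} [NormedAddCommGroup E] [NormedSpace ℝ E]

theorem ae_norm_exp_neg_mul_smul_le {g : ℝ → E} {l C : ℝ} (hC : ∀ u, 0 < u → ‖g u‖ ≤ C) :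
    ∀ᵐ u ∂volume.restrict (Ioi 0), ‖Real.exp (-l * u) • g u‖ ≤ Real.exp (-l * u) * C := by
  filter_upwards [ae_restrict_mem measurableSet_Ioi] with u hu
  rw [norm_smul, Real.norm_of_nonneg (Real.exp_pos _).le]
  exact mul_le_mul_of_nonneg_left (hC u hu) (Real.exp_pos _).le

theorem integrableOn_exp_neg_mul_smul {g : ℝ → E} {l C : ℝ} (hl : 0 < l)
    (hg : ContinuousOn g (Ioi 0)) (hC : ∀ u, 0 < u → ‖g u‖ ≤ C) :
    IntegrableOn (fun u => Real.exp (-l * u) • g u) (Ioi 0) := by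
  refine Integrable.mono' ((exp_neg_integrableOn_Ioi 0 hl).mul_const C) ?_
    (ae_norm_exp_neg_mul_smul_le hC)
  exact ((Real.continuous_exp.comp (continuous_const.mul continuous_id)).continuousOn.smul
    hg).aestronglyMeasurable measurableSet_Ioi

theorem norm_setIntegral_exp_neg_mul_smul_le {g : ℝ → E} {l C : ℝ} (hl : 0 < l)
    (hC : ∀ u, 0 < u → ‖g u‖ ≤ C) :
    ‖∫ u in Ioi 0, Real.exp (-l * u) • g u‖ ≤ C / l := by
  have hexp : ∫ u in Ioi (0 : ℝ), Real.exp (-l * u) * C = C / l := by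
    rw [integral_mul_const, integral_exp_mul_Ioi (neg_lt_zero.2 hl) 0]
    rw [mul_zero, Real.exp_zero]
    field_simp
  exact hexp ▸ norm_integral_le_of_norm_le ((exp_neg_integrableOn_Ioi 0 hl).mul_const C)
    (ae_norm_exp_neg_mul_smul_le hC)

theorem setIntegral_Ioi_zero_comp_const_add (g : ℝ → E) (s : ℝ) :
    ∫ u in Ioi 0, g (s + u) = ∫ u in Ioi s, g u := by
  simpa using (measurePreserving_add_left volume s).setIntegral_preimage_emb
    (measurableEmbedding_addLeft s) g (Ioi s)

theorem hasDerivWithinAt_setIntegral_Ioi [CompleteSpace E] {f : ℝ → E} {a : ℝ}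
    (hf : IntegrableOn f (Ioi a)) (hfc : ContinuousOn f (Ici a)) :
    HasDerivWithinAt (fun t => ∫ u in Ioi t, f u) (-f a) (Ici a) a := by
  have hprimitive : HasDerivWithinAt (fun t => ∫ u in a..t, f u) (f a) (Ici a) a :=
    intervalIntegral.integral_hasDerivWithinAt_right IntervalIntegrable.refl
      ((hfc.mono Ioi_subset_Ici_self).stronglyMeasurableAtFilter_nhdsWithin measurableSet_Ioi a)
      ((hfc a self_mem_Ici).mono Ioi_subset_Ici_self)
  have h := (hasDerivWithinAt_const a (Ici a) (∫ u in Ioi a, f u)).sub hprimitive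
  rw [zero_sub] at h
  refine h.congr_of_mem (fun t ht => ?_) self_mem_Ici
  rw [Pi.sub_apply, ← intervalIntegral.integral_Ioi_sub_Ioi hf ht, sub_sub_cancel]

end LaplaceIntegral

section SemigroupLaplace

variable {E : Type*} [NormedAddCommGroup E] [NormedSpace ℝ E] {S : ℝ → E →L[ℝ] E} {M l : ℝ}

theorem tendsto_slope_apply_of_commute (R : E →L[ℝ] E)
    (hRS : ∀ t, 0 < t → ∀ x, S t (R x) = R (S t x)) {x L : E}
    (hx : Tendsto (fun t : ℝ => t⁻¹ • (S t x - x)) (𝓝[>] 0) (𝓝 L)) :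
    Tendsto (fun t : ℝ => t⁻¹ • (S t (R x) - R x)) (𝓝[>] 0) (𝓝 (R L)) := by
  refine ((R.continuous.tendsto L).comp hx).congr' ?_
  filter_upwards [self_mem_nhdsWithin] with t ht
  rw [Function.comp_apply, map_smul, map_sub, hRS t ht]

noncomputable def laplaceTransform (S : ℝ → E →L[ℝ] E) (l : ℝ) (y : E) : E :=
  ∫ u in Ioi 0, Real.exp (-l * u) • S u y

theorem integrableOn_exp_neg_mul_smul_semigroup (hl : 0 < l)
    (hScont : ∀ x : E, ContinuousOn (fun t => S t x) (Ici 0)) (hM : ∀ t, 0 ≤ t → ‖S t‖ ≤ M)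
    (y : E) : IntegrableOn (fun u => Real.exp (-l * u) • S u y) (Ioi 0) :=
  integrableOn_exp_neg_mul_smul hl ((hScont y).mono Ioi_subset_Ici_self)
    fun u hu => (S u).le_of_opNorm_le (hM u hu.le) y

theorem exists_continuousLinearMap_eq_laplaceTransform (hl : 0 < l)
    (hScont : ∀ x : E, ContinuousOn (fun t => S t x) (Ici 0)) (hM : ∀ t, 0 ≤ t → ‖S t‖ ≤ M) :
    ∃ R : E →L[ℝ] E, ⇑R = laplaceTransform S l := by
  have hint := integrableOn_exp_neg_mul_smul_semigroup hl hScont hM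
  let R : E →ₗ[ℝ] E :=
    { toFun := laplaceTransform S l
      map_add' := fun y z => by
        simp only [laplaceTransform, map_add, smul_add]
        exact integral_add (hint y) (hint z)
      map_smul' := fun c y => by
        simp only [laplaceTransform, map_smul, smul_comm _ c, RingHom.id_apply]
        exact integral_smul c _ }
  refine ⟨R.mkContinuous (M / l) fun y => ?_, rfl⟩
  rw [div_mul_eq_mul_div]
  exact norm_setIntegral_exp_neg_mul_smul_le hl fun u hu => (S u).le_of_opNorm_le (hM u hu.le) y

theorem semigroup_apply_laplaceTransform [CompleteSpace E] (hl : 0 < l)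
    (hSadd : ∀ s t : ℝ, 0 ≤ s → 0 ≤ t → S (s + t) = (S s).comp (S t))
    (hScont : ∀ x : E, ContinuousOn (fun t => S t x) (Ici 0)) (hM : ∀ t, 0 ≤ t → ‖S t‖ ≤ M)
    {s : ℝ} (hs : 0 ≤ s) (y : E) :
    S s (laplaceTransform S l y) = ∫ u in Ioi 0, Real.exp (-l * u) • S (s + u) y := by
  rw [laplaceTransform, ← (S s).integral_comp_comm
    (integrableOn_exp_neg_mul_smul_semigroup hl hScont hM y)]
  refine setIntegral_congr_fun measurableSet_Ioi fun u hu => ?_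
  rw [map_smul, hSadd s u hs (le_of_lt hu), ContinuousLinearMap.comp_apply]

theorem semigroup_apply_laplaceTransform_comm [CompleteSpace E] (hl : 0 < l)
    (hSadd : ∀ s t : ℝ, 0 ≤ s → 0 ≤ t → S (s + t) = (S s).comp (S t))
    (hScont : ∀ x : E, ContinuousOn (fun t => S t x) (Ici 0)) (hM : ∀ t, 0 ≤ t → ‖S t‖ ≤ M)
    {s : ℝ} (hs : 0 ≤ s) (y : E) :
    S s (laplaceTransform S l y) = laplaceTransform S l (S s y) := by
  rw [semigroup_apply_laplaceTransform hl hSadd hScont hM hs, laplaceTransform]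
  refine setIntegral_congr_fun measurableSet_Ioi fun u hu => ?_
  rw [add_comm, hSadd u s (le_of_lt hu) hs, ContinuousLinearMap.comp_apply]

theorem semigroup_apply_laplaceTransform_eq_exp_smul [CompleteSpace E] (hl : 0 < l)
    (hSadd : ∀ s t : ℝ, 0 ≤ s → 0 ≤ t → S (s + t) = (S s).comp (S t))
    (hScont : ∀ x : E, ContinuousOn (fun t => S t x) (Ici 0)) (hM : ∀ t, 0 ≤ t → ‖S t‖ ≤ M)
    {s : ℝ} (hs : 0 ≤ s) (y : E) :
    S s (laplaceTransform S l y) =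
      Real.exp (l * s) • ∫ u in Ioi s, Real.exp (-l * u) • S u y := by
  have hshift : ∀ u, Real.exp (-l * u) • S (s + u) y =
      Real.exp (l * s) • (Real.exp (-l * (s + u)) • S (s + u) y) := fun u => by
    rw [smul_smul, ← Real.exp_add]
    ring_nf
  simp_rw [semigroup_apply_laplaceTransform hl hSadd hScont hM hs, hshift, integral_smul,
    setIntegral_Ioi_zero_comp_const_add (fun u => Real.exp (-l * u) • S u y) s]

theorem norm_semigroup_apply_laplaceTransform_le [CompleteSpace E] (hl : 0 < l)
    (hSadd : ∀ s t : ℝ, 0 ≤ s → 0 ≤ t → S (s + t) = (S s).comp (S t))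
    (hScont : ∀ x : E, ContinuousOn (fun t => S t x) (Ici 0)) (hM : ∀ t, 0 ≤ t → ‖S t‖ ≤ M)
    {z : E} {C : ℝ} (hz : ∀ t, 0 ≤ t → ‖S t z‖ ≤ C) {s : ℝ} (hs : 0 ≤ s) :
    ‖S s (laplaceTransform S l z)‖ ≤ C / l := by
  rw [semigroup_apply_laplaceTransform hl hSadd hScont hM hs]
  exact norm_setIntegral_exp_neg_mul_smul_le hl fun u hu => hz (s + u) (by positivity)

theorem norm_semigroup_apply_laplaceTransform_iterate_le [CompleteSpace E] (hl : 0 < l)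
    (hSadd : ∀ s t : ℝ, 0 ≤ s → 0 ≤ t → S (s + t) = (S s).comp (S t))
    (hScont : ∀ x : E, ContinuousOn (fun t => S t x) (Ici 0)) (hM : ∀ t, 0 ≤ t → ‖S t‖ ≤ M)
    (k : ℕ) (y : E) {s : ℝ} (hs : 0 ≤ s) :
    ‖S s ((laplaceTransform S l)^[k] y)‖ ≤ M * ‖y‖ / l ^ k := by
  induction k generalizing s with
  | zero => simpa using (S s).le_of_opNorm_le (hM s hs) y
  | succ k ih =>
    rw [Function.iterate_succ_apply', pow_succ, ← div_div]
    exact norm_semigroup_apply_laplaceTransform_le hl hSadd hScont hM (fun t ht => ih ht) hs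

theorem norm_pow_le_of_coe_eq_laplaceTransform [CompleteSpace E] (hl : 0 < l) (hS0 : S 0 = 1)
    (hSadd : ∀ s t : ℝ, 0 ≤ s → 0 ≤ t → S (s + t) = (S s).comp (S t))
    (hScont : ∀ x : E, ContinuousOn (fun t => S t x) (Ici 0)) (hM : ∀ t, 0 ≤ t → ‖S t‖ ≤ M)
    {R : E →L[ℝ] E} (hR : ⇑R = laplaceTransform S l) (k : ℕ) :
    ‖R ^ k‖ ≤ M / l ^ k := by
  have hM0 : 0 ≤ M := (norm_nonneg _).trans (hM 0 le_rfl)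
  refine (R ^ k).opNorm_le_bound (by positivity) fun y => ?_
  have h := norm_semigroup_apply_laplaceTransform_iterate_le hl hSadd hScont hM k y le_rfl
  rwa [hS0, one_apply_eq_self, ← hR, ← FunLike.coe_pow_eq_iterate,
    mul_div_right_comm] at h

theorem tendsto_slope_semigroup_laplaceTransform [CompleteSpace E] (hl : 0 < l) (hS0 : S 0 = 1)
    (hSadd : ∀ s t : ℝ, 0 ≤ s → 0 ≤ t → S (s + t) = (S s).comp (S t))
    (hScont : ∀ x : E, ContinuousOn (fun t => S t x) (Ici 0)) (hM : ∀ t, 0 ≤ t → ‖S t‖ ≤ M)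
    (y : E) :
    Tendsto (fun t : ℝ => t⁻¹ • (S t (laplaceTransform S l y) - laplaceTransform S l y))
      (𝓝[>] 0) (𝓝 (l • laplaceTransform S l y - y)) := by
  set f : ℝ → E := fun u => Real.exp (-l * u) • S u y
  have hF : ∀ t, 0 ≤ t → S t (laplaceTransform S l y) = Real.exp (l * t) • ∫ u in Ioi t, f u :=
    fun t ht => semigroup_apply_laplaceTransform_eq_exp_smul hl hSadd hScont hM ht y
  have hexp : HasDerivAt (fun t => Real.exp (l * t)) l 0 := by
    simpa using ((hasDerivAt_id (0 : ℝ)).const_mul l).exp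
  have hF0 : laplaceTransform S l y = Real.exp (l * 0) • ∫ u in Ioi 0, f u := by
    simpa [hS0] using hF 0 le_rfl
  have hderiv : HasDerivWithinAt (fun t => Real.exp (l * t) • ∫ u in Ioi t, f u)
      (l • laplaceTransform S l y - y) (Ici 0) 0 := by
    refine (hexp.hasDerivWithinAt.smul (hasDerivWithinAt_setIntegral_Ioi
      (integrableOn_exp_neg_mul_smul_semigroup hl hScont hM y)
      ((Real.continuous_exp.comp (continuous_const.mul continuous_id)).continuousOn.smul
        (hScont y)))).congr_deriv ?_
    simp [hS0, laplaceTransform, sub_eq_neg_add]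
  rw [← hasDerivWithinAt_Ioi_iff_Ici, hasDerivWithinAt_iff_tendsto_slope' self_notMem_Ioi] at hderiv
  refine hderiv.congr' ?_
  filter_upwards [self_mem_nhdsWithin] with t ht
  rw [slope_def_module, sub_zero, hF t (le_of_lt ht), hF0]

end SemigroupLaplace

/-- Feller–Miyadera–Phillips resolvent estimate: if `A` generates a uniformly bounded
strongly continuous semigroup `S` on a real Banach space `E` with `‖S_t‖ ≤ M`, then every
`λ > 0` lies in the resolvent set of `A` and `‖(λ·Id − A)^{−k}‖ ≤ M / λ^k` for all `k ≥ 1`. -/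
theorem resolvent_bound_of_bounded_semigroup {E : Type*} [NormedAddCommGroup E]
    [NormedSpace ℝ E] [CompleteSpace E]
    (S : ℝ → E →L[ℝ] E) (M : ℝ)
    (hS0 : S 0 = 1)
    (hSadd : ∀ s t : ℝ, 0 ≤ s → 0 ≤ t → S (s + t) = (S s).comp (S t))
    (hScont : ∀ x : E, ContinuousOn (fun t => S t x) (Set.Ici (0:ℝ)))
    (hM : ∀ t : ℝ, 0 ≤ t → ‖S t‖ ≤ M)
    (D : Set E) (A : E → E)
    (hgen : ∀ (x : E) (L : E), (x ∈ D ∧ A x = L) ↔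
      Tendsto (fun t : ℝ => t⁻¹ • (S t x - x)) (𝓝[>] (0:ℝ)) (𝓝 L)) :
    ∀ l : ℝ, 0 < l → ∃ R : E →L[ℝ] E,
      (∀ x ∈ D, R (l • x - A x) = x) ∧
      (∀ y : E, R y ∈ D ∧ l • R y - A (R y) = y) ∧
      (∀ k : ℕ, 1 ≤ k → ‖(R ^ k : E →L[ℝ] E)‖ ≤ M / l ^ k) := by
  intro l hl
  obtain ⟨R, hR⟩ := exists_continuousLinearMap_eq_laplaceTransform hl hScont hM
  have hrange : ∀ y, R y ∈ D ∧ A (R y) = l • R y - y := fun y =>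
    (hgen _ _).2 (hR ▸ tendsto_slope_semigroup_laplaceTransform hl hS0 hSadd hScont hM y)
  have hcomm : ∀ x ∈ D, A (R x) = R (A x) := fun x hx =>
    ((hgen _ _).2 (tendsto_slope_apply_of_commute R
      (fun t ht y => hR ▸ semigroup_apply_laplaceTransform_comm hl hSadd hScont hM ht.le y)
      ((hgen x _).1 ⟨hx, rfl⟩))).2
  refine ⟨R, fun x hx => ?_, fun y => ⟨(hrange y).1, by rw [(hrange y).2, sub_sub_cancel]⟩,
    fun k _ => norm_pow_le_of_coe_eq_laplaceTransform hl hS0 hSadd hScont hM hR k⟩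
  rw [map_sub, map_smul, ← hcomm x hx, (hrange x).2, sub_sub_cancel]
end

section
/- Let E be a real Banach space, A the generator of a uniformly bounded strongly continuous semigroup S with bound M, and for λ > 0 let A_λ = A(Id − A/λ)^(−1) = λ² R_λ(A) − λ·Id be the Yosida approximation, where R_λ(A) = (λ·Id − A)^(−1). Then the uniformly continuous semigroup S^λ generated by A_λ satisfies ‖S^λ_t‖ ≤ M for all t ≥ 0 and λ > 0. -/
/-!
Expanding the exponential and bounding it termwise by the resolvent estimates gives
`‖e^{tλ² R}‖ ≤ ∑ₖ (tλ²)ᵏ (M / λᵏ) / k! = M e^{tλ}`, which the scalar factor `e^{−λt}` cancels exactly.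
-/

open NormedSpace

theorem norm_exp_le_of_norm_pow_le {𝔸 : Type*} [NormedRing 𝔸] [NormedAlgebra ℝ 𝔸] {a : 𝔸} {C r : ℝ}
    (h : ∀ k : ℕ, ‖a ^ k‖ ≤ C * r ^ k) : ‖exp a‖ ≤ C * Real.exp r := by
  have hterm : ∀ k : ℕ, ‖(k.factorial : ℝ)⁻¹ • a ^ k‖ ≤ C * (r ^ k / k.factorial) := by
    intro k
    rw [norm_smul, norm_inv, Real.norm_natCast, mul_div_assoc', ← div_eq_inv_mul]
    exact div_le_div_of_nonneg_right (h k) (by positivity)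
  rw [exp_eq_tsum ℝ, Real.exp_eq_exp_ℝ, exp_eq_tsum_div, ← tsum_mul_left]
  exact (norm_tsum_le_tsum_norm (norm_expSeries_summable' a)).trans <|
    (norm_expSeries_summable' a).tsum_le_tsum hterm
      ((Real.summable_pow_div_factorial r).mul_left C)

theorem yosida_semigroup_bound_general {E : Type*} [NormedAddCommGroup E]
    [NormedSpace ℝ E]
    (M l : ℝ) (hl : 0 < l) (R : E →L[ℝ] E)
    (hR : ∀ k : ℕ, ‖(R ^ k : E →L[ℝ] E)‖ ≤ M / l ^ k) :
    ∀ t : ℝ, 0 ≤ t →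
      ‖Real.exp (-(l * t)) • NormedSpace.exp ((t * l ^ 2) • R)‖ ≤ M := by
  intro t ht
  have hpow : ∀ k : ℕ, ‖((t * l ^ 2) • R) ^ k‖ ≤ M * (t * l) ^ k := by
    intro k
    rw [smul_pow, norm_smul, Real.norm_of_nonneg (by positivity)]
    calc (t * l ^ 2) ^ k * ‖R ^ k‖ ≤ (t * l ^ 2) ^ k * (M / l ^ k) :=
          mul_le_mul_of_nonneg_left (hR k) (by positivity)
      _ = M * (t * l) ^ k := by field_simp; ring
  calc ‖Real.exp (-(l * t)) • exp ((t * l ^ 2) • R)‖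
      = Real.exp (-(l * t)) * ‖exp ((t * l ^ 2) • R)‖ := by
        rw [norm_smul, Real.norm_of_nonneg (Real.exp_nonneg _)]
    _ ≤ Real.exp (-(l * t)) * (M * Real.exp (t * l)) :=
        mul_le_mul_of_nonneg_left (norm_exp_le_of_norm_pow_le hpow) (Real.exp_nonneg _)
    _ = M := by rw [mul_left_comm, ← Real.exp_add, mul_comm t, neg_add_cancel, Real.exp_zero, mul_one]

/-- Yosida approximation bound: if `R = R_λ(A)` satisfies the resolvent estimates
`‖R^k‖ ≤ M/λ^k`, then the uniformly continuous semigroup `S^λ_t = e^{−λt} e^{tλ² R}`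
generated by the Yosida approximation `A_λ = λ² R − λ·Id` satisfies `‖S^λ_t‖ ≤ M`
for all `t ≥ 0`. -/
theorem yosida_semigroup_bound {E : Type*} [NormedAddCommGroup E]
    [NormedSpace ℝ E] [CompleteSpace E]
    (M l : ℝ) (hl : 0 < l) (R : E →L[ℝ] E)
    (hR : ∀ k : ℕ, ‖(R ^ k : E →L[ℝ] E)‖ ≤ M / l ^ k) :
    ∀ t : ℝ, 0 ≤ t →
      ‖Real.exp (-(l * t)) • NormedSpace.exp ((t * l ^ 2) • R)‖ ≤ M :=
  yosida_semigroup_bound_general M l hl R hR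
end

section
/- Let H, U be separable real Hilbert spaces, B: U → H an injective Hilbert–Schmidt operator, (e_k)_{k∈ℕ} an orthonormal basis of U consisting of eigenvectors of B*B, and for n ∈ ℕ let P_n be the orthogonal projection onto span{e_0, …, e_{n−1}}. If X^n is a centered Gaussian random variable on H with covariance B P_n P_n* B* and X^∞ has covariance BB*, then for φ(x) = exp(−‖x‖²_H/2), E[φ(X^n)] = exp(−(1/2)·Σ_{k=0}^{n−1} log(1 + ‖B e_k‖²_H)). -/
/-!
Since `B*B e_k = ‖B e_k‖² e_k`, the vectors `B e_k` are pairwise orthogonal, so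
`‖Xⁿ‖² = Σ_{k<n} ‖B e_k‖² g_k²` by Pythagoras. By independence the expectation of
`exp(−‖Xⁿ‖²/2)` factors into one-dimensional Gaussian integrals
`E[exp(−c g²/2)] = (1 + c)^(−1/2)`.
-/

open MeasureTheory ProbabilityTheory Real

theorem norm_sum_sq_eq_sum_norm_sq_of_pairwise_inner_eq_zero {𝕜 E ι : Type*} [RCLike 𝕜]
    [NormedAddCommGroup E] [InnerProductSpace 𝕜 E] {v : ι → E}
    (hv : Pairwise fun i j => inner 𝕜 (v i) (v j) = 0) (s : Finset ι) :
    ‖∑ i ∈ s, v i‖ ^ 2 = ∑ i ∈ s, ‖v i‖ ^ 2 := by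
  classical
  induction s using Finset.induction_on with
  | empty => simp
  | insert a s ha ih =>
    have horth : inner 𝕜 (v a) (∑ i ∈ s, v i) = 0 := by
      rw [inner_sum]
      exact Finset.sum_eq_zero fun i hi => hv (ne_of_mem_of_not_mem hi ha).symm
    rw [Finset.sum_insert ha, Finset.sum_insert ha,
      @norm_add_sq 𝕜, horth, map_zero, mul_zero, add_zero, ih]

theorem ContinuousLinearMap.pairwise_inner_map_eq_zero_of_adjoint_comp_eq_smul
    {𝕜 E F ι : Type*} [RCLike 𝕜] [NormedAddCommGroup E] [InnerProductSpace 𝕜 E] [CompleteSpace E]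
    [NormedAddCommGroup F] [InnerProductSpace 𝕜 F] [CompleteSpace F]
    (T : E →L[𝕜] F) {e : ι → E} (he : Pairwise fun i j => inner 𝕜 (e i) (e j) = 0) (μ : ι → 𝕜)
    (heig : ∀ k, (adjoint T ∘L T) (e k) = μ k • e k) :
    Pairwise fun i j => inner 𝕜 (T (e i)) (T (e j)) = 0 := by
  intro i j hij
  rw [← adjoint_inner_right, ← comp_apply, heig, inner_smul_right, he hij, mul_zero]

theorem integral_exp_neg_mul_sq_div_two_gaussianReal {c : ℝ} (hc : -1 < c) :
    ∫ x, exp (-(c * x ^ 2) / 2) ∂(gaussianReal 0 1) = exp (-(1 / 2) * log (1 + c)) := by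
  have hc' : 0 < 1 + c := by linarith
  have hpdf : ∀ x : ℝ, gaussianPDFReal 0 1 x • exp (-(c * x ^ 2) / 2)
      = (√(2 * π))⁻¹ * exp (-((1 + c) / 2) * x ^ 2) := by
    intro x
    rw [gaussianPDFReal, NNReal.coe_one, mul_one, smul_eq_mul, mul_assoc, ← exp_add]
    congr 2
    ring
  simp_rw [integral_gaussianReal_eq_integral_smul one_ne_zero, hpdf, integral_const_mul,
    integral_gaussian]
  rw [show π / ((1 + c) / 2) = 2 * π / (1 + c) by field_simp, sqrt_div (by positivity),
    div_eq_mul_inv, inv_mul_cancel_left₀ (by positivity), ← sqrt_inv, sqrt_eq_rpow,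
    ← rpow_neg_one, ← rpow_mul hc'.le, rpow_def_of_pos hc']
  congr 1
  ring

theorem integral_exp_neg_sum_mul_sq_div_two_of_iIndepFun {Ω ι : Type*} [MeasurableSpace Ω]
    {P : Measure Ω} {g : ι → Ω → ℝ} (hgmeas : ∀ i, AEMeasurable (g i) P)
    (hgauss : ∀ i, P.map (g i) = gaussianReal 0 1) (hindep : iIndepFun g P)
    (c : ι → ℝ) (s : Finset ι) (hc : ∀ i ∈ s, -1 < c i) :
    ∫ ω, exp (-(∑ i ∈ s, c i * g i ω ^ 2) / 2) ∂P = exp (-(1 / 2) * ∑ i ∈ s, log (1 + c i)) := by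
  set φ : ι → ℝ → ℝ := fun i x => -(c i * x ^ 2) / 2
  have hφ : ∀ i, Measurable (φ i) := fun i => by fun_prop
  have hmgf : ∫ ω, exp (-(∑ i ∈ s, c i * g i ω ^ 2) / 2) ∂P
      = mgf (∑ i ∈ s, φ i ∘ g i) P 1 := by
    simp only [mgf, Finset.sum_apply, Function.comp_apply, one_mul, φ, Finset.sum_div,
      ← Finset.sum_neg_distrib, neg_div]
  have hfactor : ∀ i ∈ s, mgf (φ i ∘ g i) P 1 = exp (-(1 / 2) * log (1 + c i)) := by
    intro i hi
    simp only [mgf, Function.comp_apply, one_mul]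
    rw [← integral_map (φ := g i) (f := fun x => exp (φ i x)) (hgmeas i) (by fun_prop), hgauss]
    exact integral_exp_neg_mul_sq_div_two_gaussianReal (hc i hi)
  rw [hmgf, (hindep.comp φ hφ).mgf_sum₀ (fun i => (hφ i).comp_aemeasurable (hgmeas i)),
    Finset.prod_congr rfl hfactor, Finset.mul_sum, exp_sum]

theorem gaussian_exp_formula_general {U H : Type*}
    [NormedAddCommGroup U] [InnerProductSpace ℝ U] [CompleteSpace U]
    [NormedAddCommGroup H] [InnerProductSpace ℝ H] [CompleteSpace H]
    (B : U →L[ℝ] H)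
    (e : ℕ → U) (he : Orthonormal ℝ e)
    (heig : ∀ k : ℕ, (ContinuousLinearMap.adjoint B ∘L B) (e k) = (‖B (e k)‖ ^ 2) • e k)
    {Ω : Type*} [MeasurableSpace Ω] (P : Measure Ω)
    (g : ℕ → Ω → ℝ) (hgmeas : ∀ k, Measurable (g k))
    (hgauss : ∀ k, Measure.map (g k) P = gaussianReal 0 1)
    (hindep : iIndepFun g P)
    (X : ℕ → Ω → H)
    (hX : ∀ (n : ℕ) (ω : Ω), X n ω = ∑ k ∈ Finset.range n, g k ω • B (e k)) :
    ∀ n : ℕ, ∫ ω, Real.exp (-‖X n ω‖ ^ 2 / 2) ∂P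
      = Real.exp (-(1/2) * ∑ k ∈ Finset.range n, Real.log (1 + ‖B (e k)‖ ^ 2)) := by
  intro n
  have horth := B.pairwise_inner_map_eq_zero_of_adjoint_comp_eq_smul he.2 _ heig
  have hnorm : ∀ ω, ‖X n ω‖ ^ 2 = ∑ k ∈ Finset.range n, ‖B (e k)‖ ^ 2 * g k ω ^ 2 := by
    intro ω
    rw [hX, norm_sum_sq_eq_sum_norm_sq_of_pairwise_inner_eq_zero (𝕜 := ℝ)
      (fun i j hij => by simp only [real_inner_smul_left, real_inner_smul_right, horth hij,
        mul_zero])]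
    simp only [norm_smul, mul_pow, norm_eq_abs, sq_abs, mul_comm]
  simp_rw [hnorm]
  exact integral_exp_neg_sum_mul_sq_div_two_of_iIndepFun (fun k => (hgmeas k).aemeasurable)
    hgauss hindep _ _ fun k _ => by linarith [sq_nonneg ‖B (e k)‖]

/-- Gaussian expectation of `φ(x) = exp(−‖x‖²/2)` for noise discretizations: if `B : U → H`
is an injective Hilbert–Schmidt operator, `(e_k)` an orthonormal basis of `U` of
eigenvectors of `B*B`, and `Xⁿ = Σ_{k<n} g_k • B e_k` is a centered Gaussian with
covariance `B P_n P_n* B*` (realized via i.i.d. standard Gaussians `g_k`), then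
`E[φ(Xⁿ)] = exp(−(1/2)·Σ_{k<n} log(1+‖B e_k‖²))`. -/
theorem gaussian_exp_formula {U H : Type*}
    [NormedAddCommGroup U] [InnerProductSpace ℝ U] [CompleteSpace U]
    [NormedAddCommGroup H] [InnerProductSpace ℝ H] [CompleteSpace H]
    (B : U →L[ℝ] H) (hBinj : Function.Injective B)
    (e : ℕ → U) (he : Orthonormal ℝ e)
    (heig : ∀ k : ℕ, (ContinuousLinearMap.adjoint B ∘L B) (e k) = (‖B (e k)‖ ^ 2) • e k)
    (hHS : Summable fun k => ‖B (e k)‖ ^ 2)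
    {Ω : Type*} [MeasurableSpace Ω] (P : Measure Ω) [IsProbabilityMeasure P]
    (g : ℕ → Ω → ℝ) (hgmeas : ∀ k, Measurable (g k))
    (hgauss : ∀ k, Measure.map (g k) P = gaussianReal 0 1)
    (hindep : iIndepFun g P)
    (X : ℕ → Ω → H)
    (hX : ∀ (n : ℕ) (ω : Ω), X n ω = ∑ k ∈ Finset.range n, g k ω • B (e k)) :
    ∀ n : ℕ, ∫ ω, Real.exp (-‖X n ω‖ ^ 2 / 2) ∂P
      = Real.exp (-(1/2) * ∑ k ∈ Finset.range n, Real.log (1 + ‖B (e k)‖ ^ 2)) :=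
  gaussian_exp_formula_general B e he heig P g hgmeas hgauss hindep X hX
end

section
/- Let (λ_k)_{k∈ℕ} be a sequence of nonnegative reals with Σ_k λ_k² < ∞ and λ_k > 0 for infinitely many k. Then lim_{n→∞} [exp(−(1/2)Σ_{k=0}^{n−1} log(1+λ_k²)) − exp(−(1/2)Σ_{k=0}^{∞} log(1+λ_k²))] / (Σ_{k=n}^{∞} λ_k²) = (1/2)·exp(−(1/2)Σ_{k=0}^{∞} log(1+λ_k²)). -/
open Filter Topology Asymptotics

/-!
Since `log (1 + x) ~ x` at `0` and `λ_k² → 0`, the tails `R n = ∑_{k ≥ n} log (1 + λ_k²)`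
and `T n = ∑_{k ≥ n} λ_k²` are asymptotically equivalent: an `o`-bound between the terms of
two series, the second nonnegative, passes to their tails. Splitting the full sum `S` at `n`,
the numerator is `exp (-S/2) * (exp (R n / 2) - 1) ~ exp (-S/2) * T n / 2`, and `T n > 0`
because infinitely many `λ_k` are positive.
-/

theorem Real.isEquivalent_exp_sub_one : (fun x => Real.exp x - 1) ~[𝓝 0] id := by
  simpa using! (Real.hasDerivAt_exp 0).isLittleO

theorem Real.isEquivalent_log_one_add : (fun x => Real.log (1 + x)) ~[𝓝 0] id := by
  have h : HasDerivAt (fun x => Real.log (1 + x)) 1 0 := by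
    simpa using ((hasDerivAt_id (0:ℝ)).const_add 1).log (by norm_num)
  simpa using! h.isLittleO

theorem Asymptotics.IsEquivalent.tendsto_div_of_const_mul {α β : Type*} [NormedField β]
    {l : Filter α} {u v : α → β} {c : β} (h : u ~[l] fun x => c * v x)
    (hv : ∀ᶠ x in l, v x ≠ 0) : Tendsto (fun x => u x / v x) l (𝓝 c) := by
  refine (h.div (IsEquivalent.refl (u := v))).symm.tendsto_nhds (tendsto_const_nhds.congr' ?_)
  filter_upwards [hv] with x hx
  simp [hx]

theorem Real.tendsto_exp_add_mul_sub_exp_div {α : Type*} {l : Filter α} {h t : α → ℝ}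
    (x a : ℝ) (hh : h ~[l] t) (hh0 : Tendsto h l (𝓝 0)) (ht : ∀ᶠ n in l, t n ≠ 0) :
    Tendsto (fun n => (Real.exp (x + a * h n) - Real.exp x) / t n) l (𝓝 (a * Real.exp x)) := by
  refine IsEquivalent.tendsto_div_of_const_mul ?_ ht
  have hexp : (fun n => Real.exp (a * h n) - 1) ~[l] fun n => a * h n :=
    Real.isEquivalent_exp_sub_one.comp_tendsto (by simpa using hh0.const_mul a)
  convert (IsEquivalent.refl (u := fun _ => Real.exp x)).mul
    (hexp.trans ((IsEquivalent.refl (u := fun _ => a)).mul hh)) using 1 <;>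
    funext n <;> simp only [Pi.mul_apply, Real.exp_add] <;> ring

section TailSums

variable {f g : ℕ → ℝ}

theorem Summable.sum_range_eq_tsum_sub_tail (hf : Summable f) (n : ℕ) :
    ∑ k ∈ Finset.range n, f k = ∑' k, f k - ∑' k, f (n + k) := by
  rw [← hf.sum_add_tsum_nat_add n]
  simp only [add_comm _ n, add_sub_cancel_right]

theorem tendsto_tsum_tail_zero (f : ℕ → ℝ) :
    Tendsto (fun n => ∑' k, f (n + k)) atTop (𝓝 0) := by
  simpa only [add_comm] using tendsto_sum_nat_add f

theorem tsum_tail_pos (hg : Summable g) (hg0 : ∀ k, 0 ≤ g k)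
    (hinf : {k | 0 < g k}.Infinite) (n : ℕ) : 0 < ∑' k, g (n + k) := by
  obtain ⟨m, hm, hnm⟩ := hinf.exists_gt n
  refine (hg.comp_injective (add_right_injective n)).tsum_pos (fun k => hg0 _) (m - n) ?_
  simpa [Nat.add_sub_cancel' hnm.le] using hm

theorem Asymptotics.IsLittleO.tsum_tail (hg : Summable g) (hg0 : ∀ k, 0 ≤ g k)
    (h : f =o[atTop] g) :
    (fun n => ∑' k, f (n + k)) =o[atTop] fun n => ∑' k, g (n + k) := by
  refine IsLittleO.of_bound fun c hc => ?_
  obtain ⟨N, hN⟩ := eventually_atTop.1 (h.bound hc)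
  filter_upwards [eventually_ge_atTop N] with n hn
  rw [Real.norm_of_nonneg (tsum_nonneg fun k => hg0 _), ← tsum_mul_left]
  refine tsum_of_norm_bounded ((hg.comp_injective (add_right_injective n)).mul_left c).hasSum
    fun k => ?_
  simpa only [Function.comp_apply, Real.norm_of_nonneg (hg0 _)] using hN (n + k) (by omega)

theorem Asymptotics.IsEquivalent.tsum_tail (hg : Summable g) (hg0 : ∀ k, 0 ≤ g k)
    (h : f ~[atTop] g) :
    (fun n => ∑' k, f (n + k)) ~[atTop] fun n => ∑' k, g (n + k) := by
  have hf : Summable f := summable_of_isBigO_nat hg h.isBigO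
  exact (h.isLittleO.tsum_tail hg hg0).congr_left fun n =>
    (hf.comp_injective (add_right_injective n)).tsum_sub (hg.comp_injective (add_right_injective n))

end TailSums

theorem sharp_weak_rate_general (l : ℕ → ℝ)
    (hsum : Summable fun k => l k ^ 2)
    (hinf : {k : ℕ | 0 < l k}.Infinite) :
    Tendsto (fun n : ℕ =>
        (Real.exp (-(1/2) * ∑ k ∈ Finset.range n, Real.log (1 + l k ^ 2))
          - Real.exp (-(1/2) * ∑' k : ℕ, Real.log (1 + l k ^ 2)))
        / (∑' k : ℕ, l (n + k) ^ 2))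
      atTop
      (𝓝 ((1/2) * Real.exp (-(1/2) * ∑' k : ℕ, Real.log (1 + l k ^ 2)))) := by
  have hsq : ∀ k, 0 ≤ l k ^ 2 := fun k => sq_nonneg _
  have hlog : (fun k => Real.log (1 + l k ^ 2)) ~[atTop] fun k => l k ^ 2 :=
    Real.isEquivalent_log_one_add.comp_tendsto hsum.tendsto_atTop_zero
  have htail := hlog.tsum_tail hsum hsq
  have htail0 := htail.tendsto_nhds_iff.2 (tendsto_tsum_tail_zero fun k => l k ^ 2)
  have hT : ∀ n, ∑' k, l (n + k) ^ 2 ≠ 0 := fun n =>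
    (tsum_tail_pos hsum hsq (hinf.mono fun k (hk : 0 < l k) => pow_pos hk 2) n).ne'
  refine (Real.tendsto_exp_add_mul_sub_exp_div (-(1/2) * ∑' k, Real.log (1 + l k ^ 2)) (1/2)
    htail htail0 (.of_forall hT)).congr fun n => ?_
  rw [(summable_of_isBigO_nat hsum hlog.isBigO).sum_range_eq_tsum_sub_tail n]
  ring_nf

/-- Sharp weak rate in the additive noise case: for nonnegative `(λ_k)` with `Σλ_k² < ∞`
and `λ_k > 0` infinitely often,
`(exp(−½Σ_{k<n} log(1+λ_k²)) − exp(−½Σ_{k} log(1+λ_k²))) / Σ_{k≥n} λ_k²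
  → ½·exp(−½Σ_k log(1+λ_k²))` as `n → ∞`. -/
theorem sharp_weak_rate (l : ℕ → ℝ) (hpos : ∀ k, 0 ≤ l k)
    (hsum : Summable fun k => l k ^ 2)
    (hinf : {k : ℕ | 0 < l k}.Infinite) :
    Tendsto (fun n : ℕ =>
        (Real.exp (-(1/2) * ∑ k ∈ Finset.range n, Real.log (1 + l k ^ 2))
          - Real.exp (-(1/2) * ∑' k : ℕ, Real.log (1 + l k ^ 2)))
        / (∑' k : ℕ, l (n + k) ^ 2))
      atTop
      (𝓝 ((1/2) * Real.exp (-(1/2) * ∑' k : ℕ, Real.log (1 + l k ^ 2)))) :=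
  sharp_weak_rate_general l hsum hinf
end
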